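/- Let α, β ∈ R, σ ∈ V⁰, and let k, m be positive integers with α + kσ ∈ R and β + mσ ∈ R. Assume a := (m/k)·(α, β^∨) is an integer. Then in Ŵ one has ŵ_α · t̂_β^{mσ} · ŵ_α = t̂_β^{mσ} · (t̂_α^{kσ})^{−a}. -/

import Mathlib

/-
Along a root string `γ + ℤτ` with `τ` in the radical, `s_{γ+pτ}(γ+qτ) = -(γ+(2p-q)τ)`, so the
generators `ŵ_{γ+nτ}` satisfy the relations of the reflections of `ℤ` in the infinite dihedral
group, and `(t̂_γ^τ)^n = ŵ_{γ+nτ} ŵ_γ`. Conjugation by `t̂_β^{mσ} = ŵ_{β+mσ} ŵ_β` acts on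
generators through `s_{β+mσ} s_β`, which sends `α - akσ` to `α` precisely because
`ak = m (α, β^∨)`. Hence `ŵ_α t̂_β^{mσ} = t̂_β^{mσ} ŵ_{α-akσ}`, and
`ŵ_{α-akσ} ŵ_α = (t̂_α^{kσ})^{-a}`.
-/

/-- The reflection `s_α(u) = u - (u, α^∨) α` associated to a vector `α`, where
`α^∨ = 2α/(α,α)` and `B` is the bilinear form. -/
noncomputable def reflMap {V : Type*} [AddCommGroup V] [Module ℝ V] (B : V →ₗ[ℝ] V →ₗ[ℝ] ℝ)
    (α : V) : V → V :=
  fun u => u - ((2 * B u α) / B α α) • α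

/-- The defining relations of the presented group `Ŵ`: (I) `ŵ_α² = 1` and
(II) `ŵ_α ŵ_β ŵ_α = ŵ_{s_α(β)}` for `α, β ∈ R`. -/
def eawRels {V : Type*} [AddCommGroup V] [Module ℝ V] (B : V →ₗ[ℝ] V →ₗ[ℝ] ℝ)
    (R : Set V) : Set (FreeGroup R) :=
  {r | ∃ α : R, r = FreeGroup.of α * FreeGroup.of α} ∪
  {r | ∃ α β γ : R, (γ : V) = reflMap B (α : V) (β : V) ∧
        r = FreeGroup.of α * FreeGroup.of β * FreeGroup.of α * (FreeGroup.of γ)⁻¹}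

/-- The group `Ŵ` presented by generators `ŵ_α` (`α ∈ R`) and relations (I), (II). -/
abbrev EAW {V : Type*} [AddCommGroup V] [Module ℝ V] (B : V →ₗ[ℝ] V →ₗ[ℝ] ℝ)
    (R : Set V) :=
  PresentedGroup (eawRels B R)

/-- The generator `ŵ_α` of `Ŵ`. -/
def wgen {V : Type*} [AddCommGroup V] [Module ℝ V] (B : V →ₗ[ℝ] V →ₗ[ℝ] ℝ)
    (R : Set V) (α : V) (hα : α ∈ R) : EAW B R :=
  PresentedGroup.of (⟨α, hα⟩ : R)

/-- The element `t̂_α^σ = ŵ_{α+σ} ŵ_α` of `Ŵ`. -/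
def tgen {V : Type*} [AddCommGroup V] [Module ℝ V] (B : V →ₗ[ℝ] V →ₗ[ℝ] ℝ)
    (R : Set V) (α σ : V) (hα : α ∈ R) (hασ : α + σ ∈ R) : EAW B R :=
  wgen B R (α + σ) hασ * wgen B R α hα

/-- Modelled on the reflections `x ↦ n - x` of `ℤ`, which generate the infinite dihedral group. -/
structure IsDihedralFamily {G : Type*} [Group G] (f : ℤ → G) : Prop where
  mul_self : ∀ n, f n * f n = 1
  mul_mul_self : ∀ p q, f p * f q * f p = f (2 * p - q)

namespace IsDihedralFamily

variable {G : Type*} [Group G] {f : ℤ → G}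

theorem succ_mul_eq (hf : IsDihedralFamily f) (n : ℕ) : f (n + 1) * f n = f 1 * f 0 := by
  induction n with
  | zero => simp
  | succ n ih =>
    have h := hf.mul_mul_self (n + 1) n
    rw [show 2 * ((n : ℤ) + 1) - n = n + 1 + 1 by ring] at h
    rw [Nat.cast_succ, ← h, mul_assoc, hf.mul_self, mul_one, ih]

theorem zpow_eq (hf : IsDihedralFamily f) (n : ℤ) : (f 1 * f 0) ^ n = f n * f 0 := by
  have hnat : ∀ k : ℕ, (f 1 * f 0) ^ k = f k * f 0 := by
    intro k
    induction k with
    | zero => simp [hf.mul_self]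
    | succ k ih =>
      rw [pow_succ', ih, ← hf.succ_mul_eq k, mul_assoc, ← mul_assoc (f k), hf.mul_self, one_mul,
        Nat.cast_succ]
  obtain ⟨k, rfl | rfl⟩ := n.eq_nat_or_neg
  · rw [zpow_natCast, hnat]
  · have h := hf.mul_mul_self 0 k
    rw [mul_zero, zero_sub] at h
    rw [zpow_neg, zpow_natCast, hnat, mul_inv_rev, inv_eq_of_mul_eq_one_right (hf.mul_self 0),
      inv_eq_of_mul_eq_one_right (hf.mul_self k), ← h, mul_assoc, hf.mul_self, mul_one]

end IsDihedralFamily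

theorem Int.mem_of_two_mul_sub_mem {S : Set ℤ} (h0 : 0 ∈ S) (h1 : 1 ∈ S)
    (h : ∀ p ∈ S, ∀ q ∈ S, 2 * p - q ∈ S) (n : ℤ) : n ∈ S := by
  suffices ∀ n : ℤ, n ∈ S ∧ n + 1 ∈ S from (this n).1
  intro n
  induction n using Int.induction_on with
  | zero => simpa using ⟨h0, h1⟩
  | succ n ih => exact ⟨ih.2, by convert h _ ih.2 _ ih.1 using 1; ring⟩
  | pred n ih => exact ⟨by convert h _ ih.1 _ ih.2 using 1; ring, by simpa using ih.1⟩

section Reflections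

variable {V : Type*} [AddCommGroup V] [Module ℝ V] (B : V →ₗ[ℝ] V →ₗ[ℝ] ℝ)

theorem reflMap_self {v : V} (hv : B v v ≠ 0) : reflMap B v v = -v := by
  rw [reflMap, mul_div_assoc, div_self hv, mul_one, two_smul]
  abel

variable {B} (hsym : ∀ u v : V, B u v = B v u) {τ τ' : V}
  (hτ : τ ∈ LinearMap.ker B) (hτ' : τ' ∈ LinearMap.ker B)
include hsym hτ hτ'

theorem reflMap_add_add (β v : V) :
    reflMap B (β + τ') (v + τ) = reflMap B β v + τ - (2 * B v β / B β β) • τ' := by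
  rw [LinearMap.mem_ker] at hτ hτ'
  simp only [reflMap, map_add, hτ, hτ', hsym _ τ', LinearMap.zero_apply, add_zero]
  module

theorem reflMap_add_reflMap_add {β : V} (hβ : B β β ≠ 0) (α : V) :
    reflMap B (β + τ') (reflMap B β (α + τ)) = α + τ + (2 * B α β / B β β) • τ' := by
  rw [LinearMap.mem_ker] at hτ hτ'
  simp only [reflMap, map_add, map_sub, map_smul, LinearMap.sub_apply, LinearMap.smul_apply, hτ,
    hτ', hsym _ τ', LinearMap.zero_apply, add_zero, smul_eq_mul, mul_zero, sub_zero]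
  have hcoef : 2 * (B α β - 2 * B α β / B β β * B β β) / B β β = -(2 * B α β / B β β) := by
    field_simp
    ring
  rw [hcoef]
  module

end Reflections

section Generators

variable {V : Type*} [AddCommGroup V] [Module ℝ V] {B : V →ₗ[ℝ] V →ₗ[ℝ] ℝ} {R : Set V}

theorem wgen_congr {u v : V} (h : u = v) (hu : u ∈ R) (hv : v ∈ R) :
    wgen B R u hu = wgen B R v hv := by
  subst h; rfl

theorem wgen_mul_self {v : V} (hv : v ∈ R) : wgen B R v hv * wgen B R v hv = 1 :=
  PresentedGroup.one_of_mem (Or.inl ⟨⟨v, hv⟩, rfl⟩)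

theorem wgen_mul_wgen_mul_wgen {u v : V} (hu : u ∈ R) (hv : v ∈ R) (hw : reflMap B u v ∈ R) :
    wgen B R u hu * wgen B R v hv * wgen B R u hu = wgen B R (reflMap B u v) hw :=
  PresentedGroup.mk_eq_mk_of_mul_inv_mem (Or.inr ⟨⟨u, hu⟩, ⟨v, hv⟩, ⟨_, hw⟩, rfl, rfl⟩)

theorem wgen_neg {v : V} (hv : v ∈ R) (hv' : -v ∈ R) (hvv : B v v ≠ 0) :
    wgen B R (-v) hv' = wgen B R v hv := by
  have h := wgen_mul_wgen_mul_wgen hv hv ((reflMap_self B hvv).symm ▸ hv')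
  rw [wgen_congr (reflMap_self B hvv), wgen_mul_self, one_mul] at h
  exact h.symm

theorem tgen_mul_wgen_mul_inv (hclos : ∀ α ∈ R, ∀ β ∈ R, reflMap B α β ∈ R)
    {β τ x : V} (hβ : β ∈ R) (hβτ : β + τ ∈ R) (hx : x ∈ R) :
    tgen B R β τ hβ hβτ * wgen B R x hx * (tgen B R β τ hβ hβτ)⁻¹ =
      wgen B R (reflMap B (β + τ) (reflMap B β x)) (hclos _ hβτ _ (hclos _ hβ _ hx)) := by
  rw [tgen, mul_inv_rev, inv_eq_of_mul_eq_one_right (wgen_mul_self hβ),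
    inv_eq_of_mul_eq_one_right (wgen_mul_self hβτ),
    ← wgen_mul_wgen_mul_wgen hβτ (hclos _ hβ _ hx), ← wgen_mul_wgen_mul_wgen hβ hx]
  simp only [mul_assoc]

end Generators

section RootStrings

variable {V : Type*} [AddCommGroup V] [Module ℝ V] {B : V →ₗ[ℝ] V →ₗ[ℝ] ℝ} {R : Set V}
  (hsym : ∀ u v : V, B u v = B v u) (hnon : ∀ α ∈ R, B α α ≠ 0)
  (hclos : ∀ α ∈ R, ∀ β ∈ R, reflMap B α β ∈ R)

include hnon hclos in
theorem neg_mem_of_mem {v : V} (hv : v ∈ R) : -v ∈ R :=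
  reflMap_self B (hnon v hv) ▸ hclos v hv v hv

variable {γ τ : V} (hτ : τ ∈ LinearMap.ker B)
include hsym hτ

theorem reflMap_add_zsmul (hγ : B γ γ ≠ 0) (p q : ℤ) :
    reflMap B (γ + p • τ) (γ + q • τ) = -(γ + (2 * p - q) • τ) := by
  rw [reflMap_add_add hsym (zsmul_mem hτ q) (zsmul_mem hτ p), reflMap_self B hγ, mul_div_assoc,
    div_self hγ, mul_one]
  module

include hnon hclos

theorem add_zsmul_mem (hγ : γ ∈ R) (hγτ : γ + τ ∈ R) (n : ℤ) : γ + n • τ ∈ R := by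
  refine Int.mem_of_two_mul_sub_mem (S := {n : ℤ | γ + n • τ ∈ R}) (by simpa) (by simpa)
    (fun p hp q hq => ?_) n
  have h := neg_mem_of_mem hnon hclos (hclos _ hp _ hq)
  rwa [reflMap_add_zsmul hsym hτ (hnon γ hγ), neg_neg] at h

theorem isDihedralFamily_wgen_add_zsmul (hγ : γ ∈ R) (hγτ : γ + τ ∈ R) :
    IsDihedralFamily fun n : ℤ =>
      wgen B R (γ + n • τ) (add_zsmul_mem hsym hnon hclos hτ hγ hγτ n) := by
  have hmem := add_zsmul_mem hsym hnon hclos hτ hγ hγτ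
  refine ⟨fun n => wgen_mul_self _, fun p q => ?_⟩
  rw [wgen_mul_wgen_mul_wgen _ _ (hclos _ (hmem p) _ (hmem q)),
    wgen_congr (reflMap_add_zsmul hsym hτ (hnon γ hγ) p q) _ (neg_mem_of_mem hnon hclos (hmem _)),
    wgen_neg _ _ (hnon _ (hmem _))]

theorem tgen_zpow (hγ : γ ∈ R) (hγτ : γ + τ ∈ R) (n : ℤ) :
    tgen B R γ τ hγ hγτ ^ n =
      wgen B R (γ + n • τ) (add_zsmul_mem hsym hnon hclos hτ hγ hγτ n) * wgen B R γ hγ := by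
  have h := (isDihedralFamily_wgen_add_zsmul hsym hnon hclos hτ hγ hγτ).zpow_eq n
  simp only [one_smul, zero_smul, add_zero] at h
  exact h

end RootStrings

theorem wgen_conj_tgen_general {V : Type*} [AddCommGroup V] [Module ℝ V]
    (B : V →ₗ[ℝ] V →ₗ[ℝ] ℝ) (R : Set V)
    (hsym : ∀ u v : V, B u v = B v u)
    (hnon : ∀ α ∈ R, B α α ≠ 0)
    (hclos : ∀ α ∈ R, ∀ β ∈ R, reflMap B α β ∈ R)
    (α β σ : V) (hα : α ∈ R) (hβ : β ∈ R) (hσ : ∀ u : V, B σ u = 0)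
    (k m : ℕ) (hk : 0 < k)
    (hαk : α + k • σ ∈ R) (hβm : β + m • σ ∈ R)
    (a : ℤ) (ha : (a : ℝ) = ((m : ℝ) / (k : ℝ)) * (2 * B α β / B β β)) :
    wgen B R α hα * tgen B R β (m • σ) hβ hβm * wgen B R α hα =
      tgen B R β (m • σ) hβ hβm * (tgen B R α (k • σ) hα hαk) ^ (-a) := by
  have hσ' : σ ∈ LinearMap.ker B := LinearMap.mem_ker.mpr (LinearMap.ext hσ)
  have hkσ : k • σ ∈ LinearMap.ker B := nsmul_mem hσ' k
  have hx := add_zsmul_mem hsym hnon hclos hkσ hα hαk (-a)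
  have hrefl : reflMap B (β + m • σ) (reflMap B β (α + (-a) • k • σ)) = α := by
    rw [reflMap_add_reflMap_add hsym (zsmul_mem hkσ (-a)) (nsmul_mem hσ' m) (hnon β hβ)]
    have hk' : (k : ℝ) ≠ 0 := by exact_mod_cast hk.ne'
    have hcoef : -(a : ℝ) * k + 2 * B α β / B β β * m = 0 := by
      rw [ha]
      field_simp
      ring
    rw [← Int.cast_smul_eq_zsmul ℝ, ← Nat.cast_smul_eq_nsmul ℝ k, ← Nat.cast_smul_eq_nsmul ℝ m,
      smul_smul, smul_smul, add_assoc, ← add_smul, Int.cast_neg, hcoef, zero_smul, add_zero]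
  have hconj : wgen B R α hα * tgen B R β (m • σ) hβ hβm =
      tgen B R β (m • σ) hβ hβm * wgen B R _ hx := by
    rw [← wgen_congr hrefl (hclos _ hβm _ (hclos _ hβ _ hx)) hα,
      ← tgen_mul_wgen_mul_inv hclos hβ hβm hx, inv_mul_cancel_right]
  rw [tgen_zpow hsym hnon hclos hkσ hα hαk, hconj, mul_assoc]

/-- For `α, β ∈ R`, `σ` in the radical, positive integers `k, m` with `α + kσ ∈ R`,
`β + mσ ∈ R`, and `a = (m/k)·(α, β^∨) ∈ ℤ`, one has
`ŵ_α · t̂_β^{mσ} · ŵ_α = t̂_β^{mσ} · (t̂_α^{kσ})^{−a}` in `Ŵ`. -/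
theorem wgen_conj_tgen {V : Type*} [AddCommGroup V] [Module ℝ V]
    (B : V →ₗ[ℝ] V →ₗ[ℝ] ℝ) (R : Set V)
    (hsym : ∀ u v : V, B u v = B v u)
    (hpsd : ∀ v : V, 0 ≤ B v v)
    (hnon : ∀ α ∈ R, B α α ≠ 0)
    (hclos : ∀ α ∈ R, ∀ β ∈ R, reflMap B α β ∈ R)
    (α β σ : V) (hα : α ∈ R) (hβ : β ∈ R) (hσ : ∀ u : V, B σ u = 0)
    (k m : ℕ) (hk : 0 < k) (hm : 0 < m)
    (hαk : α + k • σ ∈ R) (hβm : β + m • σ ∈ R)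
    (a : ℤ) (ha : (a : ℝ) = ((m : ℝ) / (k : ℝ)) * (2 * B α β / B β β)) :
    wgen B R α hα * tgen B R β (m • σ) hβ hβm * wgen B R α hα =
      tgen B R β (m • σ) hβ hβm * (tgen B R α (k • σ) hα hαk) ^ (-a) :=
  wgen_conj_tgen_general B R hsym hnon hclos α β σ hα hβ hσ k m hk hαk hβm a ha
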